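/- arXiv:2405.08358 — 3 statements merged into one kernel-verified Lean document; each statement's English description precedes it below -/
import Mathlib

section
/- For every p ∈ (1, ∞) and every f ∈ L^p(∂T, ν) one has ‖f‖_{L^p(∂T,ν)}^p ≤ ‖𝒫f‖_{H^p}^p = sup_{k ∈ ℤ} Σ_{x : ℓ(x)=k} |𝒫f(x)|^p m_ν(x). Consequently ‖𝒫f‖_{H^p} = ‖f‖_{L^p(∂T,ν)}. -/
/-!
Write `A_k g (ω) = 𝒫 g (ω k)`: it is the conditional expectation of `g` on the σ-algebra of
level-`k` sectors, and the `k`-th sum of `‖𝒫 g‖_{H^p}^p` is `‖A_k g‖_p^p`. Jensen's inequality on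
each sector makes `A_k` an `L^p` contraction, so `‖𝒫 f‖_{H^p} ≤ ‖f‖_p`. Conversely the sets that
are unions of sectors at all deep enough levels form an algebra generating the σ-algebra, so
functions fixed by `A_k` for all `k ≤ k₀` are dense in `L^p`; for such an `h` and `k = k₀`,
`‖f‖_p ≤ ‖h‖_p + ‖f - h‖_p = ‖A_k f + A_k (h - f)‖_p + ‖f - h‖_p ≤ ‖A_k f‖_p + 2 ‖f - h‖_p`.
-/

open MeasureTheory
open scoped ENNReal NNReal

/-- The punctured boundary `∂T` of the tree: maps `ω : ℤ → T` with `lev (ω j) = j`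
and `par (ω j) = ω (j+1)`. -/
def PBoundary {T : Type*} (par : T → T) (lev : T → ℤ) : Type _ :=
  {ω : ℤ → T // (∀ j : ℤ, lev (ω j) = j) ∧ ∀ j : ℤ, par (ω j) = ω (j + 1)}

/-- The boundary sector `∂T_x`. -/
def sector {T : Type*} (par : T → T) (lev : T → ℤ) (x : T) : Set (PBoundary par lev) :=
  {ω : PBoundary par lev | ω.1 (lev x) = x}

/-- The σ-algebra on `∂T` generated by the sectors. -/
instance {T : Type*} (par : T → T) (lev : T → ℤ) : MeasurableSpace (PBoundary par lev) :=
  MeasurableSpace.generateFrom (Set.range (sector par lev))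

/-- The flow measure `m_ν x = ν (∂T_x)` (as a real number). -/
noncomputable def mnu {T : Type*} (par : T → T) (lev : T → ℤ)
    (ν : Measure (PBoundary par lev)) (x : T) : ℝ :=
  (ν (sector par lev x)).toReal

/-- The Poisson integral operator `𝒫 g (x) = m_ν(x)⁻¹ ∫_{∂T_x} g dν`. -/
noncomputable def poisson {T : Type*} (par : T → T) (lev : T → ℤ)
    (ν : Measure (PBoundary par lev)) (g : PBoundary par lev → ℝ) (x : T) : ℝ :=
  (mnu par lev ν x)⁻¹ * ∫ ω in sector par lev x, g ω ∂ν

open ProbabilityTheory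

section Jensen

variable {α E : Type*} [MeasurableSpace α] [NormedAddCommGroup E] {μ : Measure α} {p : ℝ}

theorem eLpNorm_ofReal_eq_lintegral (hp : 0 < p) (f : α → E) :
    eLpNorm f (ENNReal.ofReal p) μ = (∫⁻ x, ‖f x‖ₑ ^ p ∂μ) ^ p⁻¹ := by
  rw [eLpNorm_eq_lintegral_rpow_enorm_toReal (by simpa using hp) ENNReal.ofReal_ne_top,
    ENNReal.toReal_ofReal hp.le, one_div]

variable [NormedSpace ℝ E] {f : α → E}

theorem enorm_integral_rpow_le [IsProbabilityMeasure μ] (hp : 1 ≤ p)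
    (hf : AEStronglyMeasurable f μ) : ‖∫ x, f x ∂μ‖ₑ ^ p ≤ ∫⁻ x, ‖f x‖ₑ ^ p ∂μ := by
  have hp0 : 0 < p := zero_lt_one.trans_le hp
  rw [← ENNReal.le_rpow_inv_iff hp0, ← eLpNorm_ofReal_eq_lintegral hp0]
  calc ‖∫ x, f x ∂μ‖ₑ ≤ eLpNorm f 1 μ := by
        rw [eLpNorm_one_eq_lintegral_enorm]; exact enorm_integral_le_lintegral_enorm f
    _ ≤ eLpNorm f (ENNReal.ofReal p) μ :=
        eLpNorm_le_eLpNorm_of_exponent_le (by simpa using hp) hf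

theorem enorm_setAverage_rpow_mul_le {s : Set α} (hs₀ : μ s ≠ 0) (hs : μ s ≠ ∞) (hp : 1 ≤ p)
    (hf : AEStronglyMeasurable f μ) :
    ‖⨍ x in s, f x ∂μ‖ₑ ^ p * μ s ≤ ∫⁻ x in s, ‖f x‖ₑ ^ p ∂μ := by
  have := cond_isProbabilityMeasure_of_finite hs₀ hs
  have hJensen := enorm_integral_rpow_le hp (hf.mono_ac cond_absolutelyContinuous) (μ := μ[|s])
  rw [ProbabilityTheory.cond, ← setAverage_eq', lintegral_smul_measure, smul_eq_mul] at hJensen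
  rwa [← ENNReal.mul_le_iff_le_inv hs₀ hs, mul_comm] at hJensen

end Jensen

theorem MeasureTheory.Measure.MeasureDense.exists_eLpNorm_indicator_sub_le {α E : Type*}
    [MeasurableSpace α] [NormedAddCommGroup E] {μ : Measure α} {p : ℝ≥0∞} [Fact (1 ≤ p)]
    [Fact (p ≠ ∞)] {𝒜 : Set (Set α)} (h𝒜 : μ.MeasureDense 𝒜) (c : E) {s : Set α}
    (hs : MeasurableSet s) (hμs : μ s ≠ ∞) {ε : ℝ≥0∞} (hε : ε ≠ 0) :
    ∃ t ∈ 𝒜, μ t ≠ ∞ ∧ eLpNorm (t.indicator (fun _ ↦ c) - s.indicator fun _ ↦ c) p μ ≤ ε := by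
  obtain ⟨_, ⟨t, ht, hμt, rfl⟩, hdist⟩ := EMetric.mem_closure_iff.1
    (h𝒜.indicatorConstLp_subset_closure p c ⟨s, hs, hμs, rfl⟩) ε (pos_iff_ne_zero.2 hε)
  refine ⟨t, ht, hμt, ?_⟩
  rw [edist_comm, Lp.edist_def] at hdist
  rw [← eLpNorm_congr_ae (indicatorConstLp_coeFn.sub indicatorConstLp_coeFn)]
  exact hdist.le

theorem countable_of_finite_fiber_of_iterate_eq {T : Type*} {par : T → T}
    (hfin : ∀ x : T, {y : T | par y = x}.Finite)
    (hconn : ∀ x y : T, ∃ n m : ℕ, par^[n] x = par^[m] y) : Countable T := by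
  rcases isEmpty_or_nonempty T with hT | hT
  · infer_instance
  obtain ⟨x₀⟩ := hT
  have hfiber : ∀ (n : ℕ) (z : T), (par^[n] ⁻¹' {z}).Finite := by
    intro n
    induction n with
    | zero => simp
    | succ n ih =>
      intro z
      rw [Function.iterate_succ, Set.preimage_comp]
      exact (ih z).preimage' fun x _ ↦ hfin x
  have hcover : Set.univ ⊆ ⋃ nm : ℕ × ℕ, par^[nm.1] ⁻¹' {par^[nm.2] x₀} := fun y _ ↦ by
    obtain ⟨n, m, h⟩ := hconn y x₀
    exact Set.mem_iUnion.2 ⟨(n, m), h⟩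
  exact Set.countable_univ_iff.1 <|
    (Set.countable_iUnion fun nm : ℕ × ℕ ↦ (hfiber nm.1 _).countable).mono hcover

namespace PBoundary

variable {T : Type*} {par : T → T} {lev : T → ℤ}

theorem lev_apply (ω : PBoundary par lev) (j : ℤ) : lev (ω.1 j) = j := ω.2.1 j

theorem apply_add_nat (ω : PBoundary par lev) (j : ℤ) (n : ℕ) :
    ω.1 (j + n) = par^[n] (ω.1 j) := by
  induction n with
  | zero => simp
  | succ n ih =>
    rw [Nat.cast_succ, ← add_assoc, ← ω.2.2, ih, Function.iterate_succ_apply']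

theorem mem_sector_apply (ω : PBoundary par lev) (j : ℤ) : ω ∈ sector par lev (ω.1 j) := by
  show ω.1 (lev (ω.1 j)) = ω.1 j
  rw [ω.lev_apply]

end PBoundary

section Sectors

variable {T : Type*} {par : T → T} {lev : T → ℤ}

theorem measurableSet_sector (x : T) : MeasurableSet (sector par lev x) :=
  MeasurableSpace.measurableSet_generateFrom ⟨x, rfl⟩

theorem sector_subset_or_disjoint {x y : T} (h : lev x ≤ lev y) :
    sector par lev x ⊆ sector par lev y ∨ Disjoint (sector par lev x) (sector par lev y) := by
  refine or_iff_not_imp_right.2 fun hxy ω hω ↦ ?_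
  obtain ⟨ω', hω'x, hω'y⟩ := Set.not_disjoint_iff.1 hxy
  obtain ⟨n, hn⟩ := Int.eq_ofNat_of_zero_le (sub_nonneg.2 h)
  have hy : lev y = lev x + n := by omega
  change ω.1 (lev y) = y
  rw [hy, PBoundary.apply_add_nat, hω, ← hω'x, ← PBoundary.apply_add_nat, ← hy]
  exact hω'y

theorem disjoint_sector {x y : T} (h : lev x = lev y) (hxy : x ≠ y) :
    Disjoint (sector par lev x) (sector par lev y) :=
  Set.disjoint_left.2 fun ω (hx : ω.1 (lev x) = x) (hy : ω.1 (lev y) = y) ↦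
    hxy (by rw [← hx, ← hy, h])

theorem iUnion_sector_level (k : ℤ) :
    ⋃ x : {x : T // lev x = k}, sector par lev x.1 = Set.univ :=
  Set.eq_univ_of_forall fun ω ↦
    Set.mem_iUnion.2 ⟨⟨ω.1 k, ω.lev_apply k⟩, ω.mem_sector_apply k⟩

theorem lintegral_eq_tsum_sector [Countable T] (ν : Measure (PBoundary par lev)) (k : ℤ)
    (G : PBoundary par lev → ℝ≥0∞) :
    ∫⁻ ω, G ω ∂ν = ∑' x : {x : T // lev x = k}, ∫⁻ ω in sector par lev x.1, G ω ∂ν := by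
  rw [← setLIntegral_univ, ← iUnion_sector_level k,
    lintegral_iUnion (fun x ↦ measurableSet_sector x.1)
      fun x y hxy ↦ disjoint_sector (x.2.trans y.2.symm) (Subtype.coe_ne_coe.2 hxy)]

theorem measurable_comp_apply [Countable T] {β : Type*} [MeasurableSpace β] (k : ℤ)
    (F : T → β) : Measurable fun ω : PBoundary par lev ↦ F (ω.1 k) := by
  let _ : MeasurableSpace T := ⊤
  refine (measurable_from_top (f := F)).comp (measurable_to_countable' fun x ↦ ?_)
  by_cases hx : lev x = k
  · subst hx
    exact measurableSet_sector x
  · convert MeasurableSet.empty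
    ext ω
    simp only [Set.mem_preimage, Set.mem_singleton_iff, Set.mem_empty_iff_false, iff_false]
    exact fun h ↦ hx (h ▸ ω.lev_apply k)

end Sectors

section LevelAverage

variable {T : Type*} {par : T → T} {lev : T → ℤ} {ν : Measure (PBoundary par lev)}

theorem poisson_eq_setAverage (g : PBoundary par lev → ℝ) (x : T) :
    poisson par lev ν g x = ⨍ ω in sector par lev x, g ω ∂ν := by
  rw [setAverage_eq, smul_eq_mul, measureReal_def]
  rfl

theorem poisson_eq_of_forall_mem_sector {g : PBoundary par lev → ℝ} {x : T} {c : ℝ}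
    (hx : 0 < ν (sector par lev x) ∧ ν (sector par lev x) < ⊤)
    (hg : ∀ ω ∈ sector par lev x, g ω = c) : poisson par lev ν g x = c := by
  rw [poisson_eq_setAverage, setAverage_congr_fun (measurableSet_sector x) (ae_of_all _ hg),
    setAverage_const hx.1.ne' hx.2.ne]

theorem poisson_add {f g : PBoundary par lev → ℝ} {x : T}
    (hf : IntegrableOn f (sector par lev x) ν) (hg : IntegrableOn g (sector par lev x) ν) :
    poisson par lev ν (f + g) x = poisson par lev ν f x + poisson par lev ν g x := by
  simp only [poisson, Pi.add_apply, integral_add hf hg, mul_add]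

variable (ν) in
/-- The conditional expectation of `g` given the σ-algebra generated by the level-`k` sectors. -/
noncomputable def levelAverage (k : ℤ) (g : PBoundary par lev → ℝ) (ω : PBoundary par lev) :
    ℝ :=
  poisson par lev ν g (ω.1 k)

theorem measurable_levelAverage [Countable T] (k : ℤ) (g : PBoundary par lev → ℝ) :
    Measurable (levelAverage ν k g) :=
  measurable_comp_apply k _

variable (ν) in
/-- The `k`-th sum in the `H^p` norm of `𝒫 g`. -/
noncomputable def levelSum (p : ℝ) (g : PBoundary par lev → ℝ) (k : ℤ) : ℝ≥0∞ :=
  ∑' x : {x : T // lev x = k}, ‖poisson par lev ν g x.1‖ₑ ^ p * ν (sector par lev x.1)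

theorem lintegral_enorm_rpow_levelAverage [Countable T] (p : ℝ) (k : ℤ)
    (g : PBoundary par lev → ℝ) :
    ∫⁻ ω, ‖levelAverage ν k g ω‖ₑ ^ p ∂ν = levelSum ν p g k := by
  rw [lintegral_eq_tsum_sector ν k]
  refine tsum_congr fun x ↦ ?_
  rw [setLIntegral_congr_fun (measurableSet_sector x.1) fun ω (hω : ω.1 (lev x.1) = x.1) ↦ by
    rw [levelAverage, ← x.2, hω], setLIntegral_const]

theorem levelSum_le_lintegral [Countable T]
    (hν : ∀ x : T, 0 < ν (sector par lev x) ∧ ν (sector par lev x) < ⊤) {p : ℝ} (hp : 1 ≤ p)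
    {g : PBoundary par lev → ℝ} (hg : AEStronglyMeasurable g ν) (k : ℤ) :
    levelSum ν p g k ≤ ∫⁻ ω, ‖g ω‖ₑ ^ p ∂ν := by
  rw [lintegral_eq_tsum_sector ν k]
  refine ENNReal.tsum_le_tsum fun x ↦ ?_
  rw [poisson_eq_setAverage]
  exact enorm_setAverage_rpow_mul_le (hν x.1).1.ne' (hν x.1).2.ne hp hg

theorem eLpNorm_levelAverage_le [Countable T]
    (hν : ∀ x : T, 0 < ν (sector par lev x) ∧ ν (sector par lev x) < ⊤) {p : ℝ} (hp : 1 ≤ p)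
    {g : PBoundary par lev → ℝ} (hg : AEStronglyMeasurable g ν) (k : ℤ) :
    eLpNorm (levelAverage ν k g) (ENNReal.ofReal p) ν ≤ eLpNorm g (ENNReal.ofReal p) ν := by
  have hp0 : 0 < p := zero_lt_one.trans_le hp
  rw [eLpNorm_ofReal_eq_lintegral hp0, eLpNorm_ofReal_eq_lintegral hp0,
    lintegral_enorm_rpow_levelAverage]
  exact ENNReal.rpow_le_rpow (levelSum_le_lintegral hν hp hg k) (inv_nonneg.2 hp0.le)

theorem levelAverage_add (hν : ∀ x : T, 0 < ν (sector par lev x) ∧ ν (sector par lev x) < ⊤)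
    {p : ℝ} (hp : 1 ≤ p) {f g : PBoundary par lev → ℝ} (hf : MemLp f (ENNReal.ofReal p) ν)
    (hg : MemLp g (ENNReal.ofReal p) ν) (k : ℤ) :
    levelAverage ν k (f + g) = levelAverage ν k f + levelAverage ν k g := by
  have hp' : 1 ≤ ENNReal.ofReal p := by simpa using hp
  funext ω
  have := isFiniteMeasure_restrict.2 (hν (ω.1 k)).2.ne
  exact poisson_add ((hf.restrict _).integrable hp') ((hg.restrict _).integrable hp')

end LevelAverage

section SectorAlgebra

variable {T : Type*} (par : T → T) (lev : T → ℤ)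

def sectorAlgebra : Set (Set (PBoundary par lev)) :=
  {t | MeasurableSet t ∧ ∃ k₀ : ℤ, ∀ x : T, lev x ≤ k₀ →
    sector par lev x ⊆ t ∨ Disjoint (sector par lev x) t}

theorem isSetAlgebra_sectorAlgebra : IsSetAlgebra (sectorAlgebra par lev) where
  empty_mem := ⟨MeasurableSet.empty, 0, fun _ _ ↦ Or.inr (Set.disjoint_empty _)⟩
  compl_mem := by
    rintro t ⟨ht, k₀, hk₀⟩
    refine ⟨ht.compl, k₀, fun x hx ↦ (hk₀ x hx).symm.imp ?_ ?_⟩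
    · exact Set.subset_compl_iff_disjoint_right.2
    · exact Set.disjoint_compl_right_iff_subset.2
  union_mem := by
    rintro s t ⟨hs, ks, hks⟩ ⟨ht, kt, hkt⟩
    refine ⟨hs.union ht, min ks kt, fun x hx ↦ ?_⟩
    rcases hks x (hx.trans (min_le_left _ _)) with hsub | hdisj
    · exact Or.inl (hsub.trans Set.subset_union_left)
    rcases hkt x (hx.trans (min_le_right _ _)) with hsub | hdisj'
    · exact Or.inl (hsub.trans Set.subset_union_right)
    · exact Or.inr (Set.disjoint_union_right.2 ⟨hdisj, hdisj'⟩)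

theorem sector_mem_sectorAlgebra (y : T) : sector par lev y ∈ sectorAlgebra par lev :=
  ⟨measurableSet_sector y, lev y, fun _ hx ↦ sector_subset_or_disjoint hx⟩

theorem generateFrom_sectorAlgebra :
    (inferInstance : MeasurableSpace (PBoundary par lev)) =
      MeasurableSpace.generateFrom (sectorAlgebra par lev) :=
  le_antisymm
    (MeasurableSpace.generateFrom_le fun _ ⟨y, hy⟩ ↦
      MeasurableSpace.measurableSet_generateFrom (hy ▸ sector_mem_sectorAlgebra par lev y))
    (MeasurableSpace.generateFrom_le fun _ ht ↦ ht.1)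

variable {par lev}

theorem measureDense_sectorAlgebra [Nonempty T] [Countable T] {ν : Measure (PBoundary par lev)}
    (hν : ∀ x : T, ν (sector par lev x) < ⊤) : ν.MeasureDense (sectorAlgebra par lev) := by
  obtain ⟨e, he⟩ := exists_surjective_nat T
  refine Measure.MeasureDense.of_generateFrom_isSetAlgebra_sigmaFinite
    (isSetAlgebra_sectorAlgebra par lev)
    { set := fun n ↦ sector par lev (e n)
      set_mem := fun n ↦ sector_mem_sectorAlgebra par lev (e n)
      finite := fun n ↦ hν (e n)
      spanning := Set.eq_univ_of_forall fun ω ↦ ?_ }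
    (generateFrom_sectorAlgebra par lev)
  obtain ⟨n, hn⟩ := he (ω.1 0)
  exact Set.mem_iUnion.2 ⟨n, hn ▸ ω.mem_sector_apply 0⟩

variable {ν : Measure (PBoundary par lev)}

theorem levelAverage_indicator_eventually_eq
    (hν : ∀ x : T, 0 < ν (sector par lev x) ∧ ν (sector par lev x) < ⊤)
    {t : Set (PBoundary par lev)} (ht : t ∈ sectorAlgebra par lev) (c : ℝ) :
    ∃ k₀ : ℤ, ∀ k ≤ k₀,
      levelAverage ν k (t.indicator fun _ ↦ c) = t.indicator fun _ ↦ c := by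
  obtain ⟨k₀, hk₀⟩ := ht.2
  refine ⟨k₀, fun k hk ↦ funext fun ω ↦ ?_⟩
  have hω := ω.mem_sector_apply k
  rcases hk₀ (ω.1 k) (by rwa [ω.lev_apply]) with hsub | hdisj
  · rw [Set.indicator_of_mem (hsub hω)]
    exact poisson_eq_of_forall_mem_sector (hν _) fun ω' hω' ↦ Set.indicator_of_mem (hsub hω') _
  · rw [Set.indicator_of_notMem (Set.disjoint_left.1 hdisj hω)]
    exact poisson_eq_of_forall_mem_sector (hν _) fun ω' hω' ↦
      Set.indicator_of_notMem (Set.disjoint_left.1 hdisj hω') _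

theorem exists_eLpNorm_sub_le_levelAverage_eq [Nonempty T] [Countable T]
    (hν : ∀ x : T, 0 < ν (sector par lev x) ∧ ν (sector par lev x) < ⊤) {p : ℝ} (hp : 1 ≤ p)
    {f : PBoundary par lev → ℝ} (hf : MemLp f (ENNReal.ofReal p) ν) {ε : ℝ≥0∞} (hε : ε ≠ 0) :
    ∃ h, eLpNorm (f - h) (ENNReal.ofReal p) ν ≤ ε ∧ MemLp h (ENNReal.ofReal p) ν ∧
      ∃ k₀ : ℤ, ∀ k ≤ k₀, levelAverage ν k h = h := by
  have : Fact (1 ≤ ENNReal.ofReal p) := ⟨by simpa using hp⟩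
  have : Fact (ENNReal.ofReal p ≠ ∞) := ⟨ENNReal.ofReal_ne_top⟩
  refine hf.induction_dense ENNReal.ofReal_ne_top _ (fun c s hs hμs ε hε ↦ ?_)
    (fun g₁ g₂ ⟨hg₁, k₁, hk₁⟩ ⟨hg₂, k₂, hk₂⟩ ↦ ⟨hg₁.add hg₂, min k₁ k₂, fun k hk ↦ ?_⟩)
    (fun _ hg ↦ hg.1.aestronglyMeasurable) hε
  · obtain ⟨t, ht, hμt, hts⟩ := (measureDense_sectorAlgebra fun x ↦ (hν x).2)
      |>.exists_eLpNorm_indicator_sub_le (p := ENNReal.ofReal p) c hs hμs.ne hε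
    exact ⟨_, hts, memLp_indicator_const _ ht.1 c (Or.inr hμt),
      levelAverage_indicator_eventually_eq hν ht c⟩
  · rw [levelAverage_add hν hp hg₁ hg₂, hk₁ k (hk.trans (min_le_left _ _)),
      hk₂ k (hk.trans (min_le_right _ _))]

end SectorAlgebra

section Main

variable {T : Type*} {par : T → T} {lev : T → ℤ} {ν : Measure (PBoundary par lev)}

theorem eLpNorm_le_eLpNorm_levelAverage_add [Countable T]
    (hν : ∀ x : T, 0 < ν (sector par lev x) ∧ ν (sector par lev x) < ⊤) {p : ℝ} (hp : 1 ≤ p)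
    {f h : PBoundary par lev → ℝ} (hf : MemLp f (ENNReal.ofReal p) ν)
    (hh : MemLp h (ENNReal.ofReal p) ν) {k : ℤ} (hfix : levelAverage ν k h = h) :
    eLpNorm f (ENNReal.ofReal p) ν ≤
      eLpNorm (levelAverage ν k f) (ENNReal.ofReal p) ν +
        2 * eLpNorm (f - h) (ENNReal.ofReal p) ν := by
  have hp' : 1 ≤ ENNReal.ofReal p := by simpa using hp
  have hsplit : levelAverage ν k h = levelAverage ν k f + levelAverage ν k (h - f) := by
    rw [← levelAverage_add hν hp hf (hh.sub hf), add_sub_cancel]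
  calc eLpNorm f (ENNReal.ofReal p) ν
      = eLpNorm (levelAverage ν k h + (f - h)) (ENNReal.ofReal p) ν := by
        rw [hfix, add_sub_cancel]
    _ ≤ eLpNorm (levelAverage ν k f) (ENNReal.ofReal p) ν +
          eLpNorm (levelAverage ν k (h - f)) (ENNReal.ofReal p) ν +
          eLpNorm (f - h) (ENNReal.ofReal p) ν := by
        rw [hsplit]
        refine (eLpNorm_add_le ?_ (hf.sub hh).aestronglyMeasurable hp').trans (add_le_add ?_ le_rfl)
        · exact (measurable_levelAverage k f).add (measurable_levelAverage k _)
            |>.aestronglyMeasurable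
        · exact eLpNorm_add_le (measurable_levelAverage k f).aestronglyMeasurable
            (measurable_levelAverage k _).aestronglyMeasurable hp'
    _ ≤ eLpNorm (levelAverage ν k f) (ENNReal.ofReal p) ν +
          eLpNorm (f - h) (ENNReal.ofReal p) ν + eLpNorm (f - h) (ENNReal.ofReal p) ν := by
        gcongr
        rw [eLpNorm_sub_comm]
        exact eLpNorm_levelAverage_le hν hp (hh.sub hf).aestronglyMeasurable k
    _ = _ := by rw [add_assoc, two_mul]

theorem eLpNorm_le_iSup_levelSum [Nonempty T] [Countable T]
    (hν : ∀ x : T, 0 < ν (sector par lev x) ∧ ν (sector par lev x) < ⊤) {p : ℝ} (hp : 1 ≤ p)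
    {f : PBoundary par lev → ℝ} (hf : MemLp f (ENNReal.ofReal p) ν) :
    eLpNorm f (ENNReal.ofReal p) ν ≤ (⨆ k, levelSum ν p f k) ^ p⁻¹ := by
  have hp0 : 0 < p := zero_lt_one.trans_le hp
  refine ENNReal.le_of_forall_pos_le_add fun ε hε _ ↦ ?_
  obtain ⟨h, hfh, hh, k, hk⟩ :=
    exists_eLpNorm_sub_le_levelAverage_eq hν hp hf (ε := ε / 2) (by simpa using hε.ne')
  calc eLpNorm f (ENNReal.ofReal p) ν
      ≤ eLpNorm (levelAverage ν k f) (ENNReal.ofReal p) ν + 2 * (ε / 2 : ℝ≥0∞) :=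
        (eLpNorm_le_eLpNorm_levelAverage_add hν hp hf hh (hk k le_rfl)).trans (by gcongr)
    _ ≤ (⨆ k, levelSum ν p f k) ^ p⁻¹ + ε := by
        rw [ENNReal.mul_div_cancel two_ne_zero ENNReal.ofNat_ne_top,
          eLpNorm_ofReal_eq_lintegral hp0, lintegral_enorm_rpow_levelAverage]
        gcongr
        exact le_iSup (levelSum ν p f) k

end Main

theorem stmt12_general {T : Type*} [Nonempty T] (par : T → T) (lev : T → ℤ)
    (hfin : ∀ x : T, {y : T | par y = x}.Finite)
    (hconn : ∀ x y : T, ∃ n m : ℕ, par^[n] x = par^[m] y)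
    (ν : Measure (PBoundary par lev))
    (hν : ∀ x : T, 0 < ν (sector par lev x) ∧ ν (sector par lev x) < ⊤)
    (p : ℝ) (hp : 1 < p)
    (f : PBoundary par lev → ℝ) (hf : MemLp f (ENNReal.ofReal p) ν) :
    (∫⁻ ω, ENNReal.ofReal (|f ω| ^ p) ∂ν)
        ≤ (⨆ k : ℤ, ∑' x : {x : T // lev x = k},
            ENNReal.ofReal (|poisson par lev ν f x.1| ^ p) * ν (sector par lev x.1)) ∧
      (⨆ k : ℤ, ∑' x : {x : T // lev x = k},
          ENNReal.ofReal (|poisson par lev ν f x.1| ^ p) * ν (sector par lev x.1))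
        = ∫⁻ ω, ENNReal.ofReal (|f ω| ^ p) ∂ν := by
  have hp0 : 0 < p := zero_lt_one.trans hp
  have := countable_of_finite_fiber_of_iterate_eq hfin hconn
  have hofReal : ∀ r : ℝ, ENNReal.ofReal (|r| ^ p) = ‖r‖ₑ ^ p := fun r ↦ by
    rw [Real.enorm_eq_ofReal_abs, ENNReal.ofReal_rpow_of_nonneg (abs_nonneg r) hp0.le]
  simp only [hofReal]
  have hle : ∫⁻ ω, ‖f ω‖ₑ ^ p ∂ν ≤ ⨆ k, levelSum ν p f k := by
    rw [← ENNReal.rpow_le_rpow_iff (inv_pos.2 hp0), ← eLpNorm_ofReal_eq_lintegral hp0]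
    exact eLpNorm_le_iSup_levelSum hν hp.le hf
  exact ⟨hle, le_antisymm (iSup_le (levelSum_le_lintegral hν hp.le hf.aestronglyMeasurable)) hle⟩

/-- For every `p ∈ (1,∞)` and `f ∈ L^p(∂T,ν)`,
`‖f‖_{L^p(ν)}^p ≤ ‖𝒫f‖_{H^p}^p`, and indeed `‖𝒫f‖_{H^p}^p = ‖f‖_{L^p(ν)}^p`. -/
theorem stmt12 {T : Type*} [Nonempty T] (par : T → T) (lev : T → ℤ)
    (hlev : ∀ x : T, lev (par x) = lev x + 1)
    (hfin : ∀ x : T, {y : T | par y = x}.Finite)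
    (hsucc : ∀ x : T, ∃ y : T, par y = x)
    (hconn : ∀ x y : T, ∃ n m : ℕ, par^[n] x = par^[m] y)
    (ν : Measure (PBoundary par lev))
    (hν : ∀ x : T, 0 < ν (sector par lev x) ∧ ν (sector par lev x) < ⊤)
    (p : ℝ) (hp : 1 < p)
    (f : PBoundary par lev → ℝ) (hf : MemLp f (ENNReal.ofReal p) ν) :
    (∫⁻ ω, ENNReal.ofReal (|f ω| ^ p) ∂ν)
        ≤ (⨆ k : ℤ, ∑' x : {x : T // lev x = k},
            ENNReal.ofReal (|poisson par lev ν f x.1| ^ p) * ν (sector par lev x.1)) ∧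
      (⨆ k : ℤ, ∑' x : {x : T // lev x = k},
          ENNReal.ofReal (|poisson par lev ν f x.1| ^ p) * ν (sector par lev x.1))
        = ∫⁻ ω, ENNReal.ofReal (|f ω| ^ p) ∂ν :=
  stmt12_general par lev hfin hconn ν hν p hp f hf
end

section
/- Assume every x ∈ T has at least two successors. The following are equivalent: (i) the metric measure space (∂T, ρ, ν) is doubling, i.e. there exists C > 0 such that ν(B_ρ(ω, 2r)) ≤ C ν(B_ρ(ω, r)) for every ω ∈ ∂T and r > 0; (ii) there exists C' > 0 such that m_ν(p(x)) ≤ C' m_ν(x) for every x ∈ T. -/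
open MeasureTheory
open scoped ENNReal NNReal

/-- The Gromov distance on `∂T`: `ρ(ω,ξ) = e^{j₀}` where `j₀` is the least level at which
`ω` and `ξ` agree (and `0` if `ω = ξ`). -/
noncomputable def grho {T : Type*} (par : T → T) (lev : T → ℤ)
    (ω ξ : PBoundary par lev) : ℝ :=
  @ite _ (ω = ξ) (Classical.dec _) 0 (sInf {r : ℝ | ∃ j : ℤ, ω.1 j = ξ.1 j ∧ r = Real.exp j})

/-- The ball of the Gromov distance. -/
def gball {T : Type*} (par : T → T) (lev : T → ℤ)
    (ω : PBoundary par lev) (r : ℝ) : Set (PBoundary par lev) :=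
  {ξ : PBoundary par lev | grho par lev ω ξ ≤ r}

/-! For `e^j ≤ r < e^{j+1}` the closed `ρ`-ball of radius `r` about `ω` is the sector of `ω j`,
the vertex of `ω` at level `j`. Doubling the radius thus enlarges such a ball at most to the sector
of the parent `par (ω j)`, and exactly so for `r = e^{j+1}/2` since `e > 2`. Hence a doubling
constant for `ν` and a local doubling constant for `m_ν` bound each other. -/

section Tree

variable {T : Type*} {par : T → T} {lev : T → ℤ}

lemma lev_iterate (hlev : ∀ x, lev (par x) = lev x + 1) (x : T) (n : ℕ) :
    lev (par^[n] x) = lev x + n := by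
  induction n with
  | zero => simp
  | succ n ih => rw [Function.iterate_succ_apply', hlev, ih]; push_cast; ring

lemma lev_iterate_of_leftInverse (hlev : ∀ x, lev (par x) = lev x + 1) {s : T → T}
    (hs : Function.LeftInverse par s) (x : T) (n : ℕ) :
    lev (s^[n] x) = lev x - n := by
  have := lev_iterate hlev (s^[n] x) n
  rw [(hs.iterate n) x] at this
  omega

lemma iterate_apply_iterate_eq_of_sub_eq {s : T → T} (hs : Function.LeftInverse par s)
    (x : T) {a b a' b' : ℕ} (h : (a : ℤ) - b = a' - b') :
    par^[a] (s^[b] x) = par^[a'] (s^[b'] x) := by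
  wlog hle : a ≤ a' generalizing a b a' b'
  · exact (this h.symm (by omega)).symm
  obtain ⟨c, rfl⟩ := Nat.exists_eq_add_of_le hle
  obtain rfl : b' = c + b := by omega
  rw [Function.iterate_add_apply, Function.iterate_add_apply s, (hs.iterate c) _]

/-- Every sector is nonempty: below `x` follow a chosen successor, above `x` follow `par`. -/
lemma sector_nonempty (hlev : ∀ x, lev (par x) = lev x + 1) (hsucc : ∀ x, ∃ y, par y = x)
    (x : T) : (sector par lev x).Nonempty := by
  choose s hs using hsucc
  let ω : ℤ → T := fun j => par^[(j - lev x).toNat] (s^[(lev x - j).toNat] x)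
  have hω_lev : ∀ j, lev (ω j) = j := fun j => by
    simp only [ω, lev_iterate hlev, lev_iterate_of_leftInverse hlev hs]
    omega
  have hω_par : ∀ j, par (ω j) = ω (j + 1) := fun j => by
    rw [← Function.iterate_succ_apply' par]
    exact iterate_apply_iterate_eq_of_sub_eq hs x (by omega)
  exact ⟨⟨ω, hω_lev, hω_par⟩, show ω (lev x) = x by simp [ω]⟩

end Tree

namespace PBoundary

variable {T : Type*} {par : T → T} {lev : T → ℤ}

lemma iterate_apply (ω : PBoundary par lev) (j : ℤ) (n : ℕ) :
    par^[n] (ω.1 j) = ω.1 (j + n) := by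
  induction n with
  | zero => simp
  | succ n ih =>
    rw [Function.iterate_succ_apply', ih, ω.2.2, Nat.cast_succ, add_assoc]

lemma apply_eq_of_le {ω ξ : PBoundary par lev} {j j' : ℤ} (h : j ≤ j')
    (hj : ω.1 j = ξ.1 j) : ω.1 j' = ξ.1 j' := by
  obtain ⟨n, rfl⟩ := Int.exists_add_of_le h
  rw [← iterate_apply, ← iterate_apply, hj]

lemma exists_apply_eq (hconn : ∀ x y : T, ∃ n m : ℕ, par^[n] x = par^[m] y)
    (ω ξ : PBoundary par lev) : ∃ j, ω.1 j = ξ.1 j := by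
  obtain ⟨n, m, h⟩ := hconn (ω.1 0) (ξ.1 0)
  rw [iterate_apply, iterate_apply] at h
  have hnm : (n : ℤ) = m := by
    have := congrArg lev h
    rwa [ω.2.1, ξ.2.1, zero_add, zero_add] at this
  rw [zero_add, zero_add, hnm] at h
  exact ⟨m, h⟩

lemma mem_sector_apply_iff {ω ξ : PBoundary par lev} {j : ℤ} :
    ξ ∈ sector par lev (ω.1 j) ↔ ξ.1 j = ω.1 j := by
  simp [sector, ω.2.1]

lemma exists_grho_eq_exp (hconn : ∀ x y : T, ∃ n m : ℕ, par^[n] x = par^[m] y)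
    {ω ξ : PBoundary par lev} (h : ω ≠ ξ) :
    ∃ j₀ : ℤ, IsLeast {j | ω.1 j = ξ.1 j} j₀ ∧ grho par lev ω ξ = Real.exp j₀ := by
  have hbdd : ∃ b : ℤ, ∀ j, ω.1 j = ξ.1 j → b ≤ j := by
    by_contra! hb
    exact h (Subtype.ext (funext fun j =>
      let ⟨_, hagree, hlt⟩ := hb j; apply_eq_of_le hlt.le hagree))
  obtain ⟨j₀, hj₀, hmin⟩ := Int.exists_least_of_bdd hbdd (exists_apply_eq hconn ω ξ)
  refine ⟨j₀, ⟨hj₀, hmin⟩, ?_⟩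
  rw [grho, if_neg h]
  refine IsLeast.csInf_eq ⟨⟨j₀, hj₀, rfl⟩, ?_⟩
  rintro r ⟨j, hj, rfl⟩
  exact Real.exp_le_exp.2 (by exact_mod_cast hmin j hj)

lemma gball_subset_sector (hconn : ∀ x y : T, ∃ n m : ℕ, par^[n] x = par^[m] y)
    (ω : PBoundary par lev) {r : ℝ} {j : ℤ} (hr : r < Real.exp (j + 1)) :
    gball par lev ω r ⊆ sector par lev (ω.1 j) := by
  intro ξ hξ
  rw [mem_sector_apply_iff]
  obtain rfl | hne := eq_or_ne ω ξ
  · rfl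
  obtain ⟨j₀, ⟨hj₀, -⟩, hρ⟩ := exists_grho_eq_exp hconn hne
  have hξ' : Real.exp j₀ < Real.exp (j + 1) := by
    rw [← hρ]; exact lt_of_le_of_lt hξ hr
  have : j₀ < j + 1 := by exact_mod_cast Real.exp_lt_exp.1 hξ'
  exact (apply_eq_of_le (Int.lt_add_one_iff.1 this) hj₀).symm

lemma sector_subset_gball (hconn : ∀ x y : T, ∃ n m : ℕ, par^[n] x = par^[m] y)
    (ω : PBoundary par lev) {r : ℝ} {j : ℤ} (hr : Real.exp j ≤ r) :
    sector par lev (ω.1 j) ⊆ gball par lev ω r := by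
  intro ξ hξ
  rw [mem_sector_apply_iff] at hξ
  show grho par lev ω ξ ≤ r
  obtain rfl | hne := eq_or_ne ω ξ
  · simpa [grho] using (Real.exp_pos _).le.trans hr
  obtain ⟨j₀, ⟨-, hmin⟩, hρ⟩ := exists_grho_eq_exp hconn hne
  rw [hρ]
  exact (Real.exp_le_exp.2 (by exact_mod_cast hmin hξ.symm)).trans hr

end PBoundary

section Doubling

variable {T : Type*} {par : T → T} {lev : T → ℤ}

open PBoundary

lemma measure_sector_par_le_of_doubling (hlev : ∀ x, lev (par x) = lev x + 1)
    (hsucc : ∀ x, ∃ y, par y = x) (hconn : ∀ x y : T, ∃ n m : ℕ, par^[n] x = par^[m] y)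
    {ν : Measure (PBoundary par lev)} {K : ℝ≥0∞}
    (hd : ∀ ω r, 0 < r → ν (gball par lev ω (2 * r)) ≤ K * ν (gball par lev ω r)) (x : T) :
    ν (sector par lev (par x)) ≤ K * ν (sector par lev x) := by
  obtain ⟨ω, hωx : ω.1 (lev x) = x⟩ := sector_nonempty hlev hsucc x
  have hωpx : ω.1 (lev x + 1) = par x := by rw [← ω.2.2, hωx]
  set r := Real.exp (lev x + 1) / 2
  have hsector_par : sector par lev (par x) ⊆ gball par lev ω (2 * r) :=
    hωpx ▸ sector_subset_gball hconn ω (by simp only [r]; push_cast; linarith)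
  have hsector : gball par lev ω r ⊆ sector par lev x :=
    hωx ▸ gball_subset_sector hconn ω (half_lt_self (Real.exp_pos _))
  calc ν (sector par lev (par x)) ≤ ν (gball par lev ω (2 * r)) := measure_mono hsector_par
    _ ≤ K * ν (gball par lev ω r) := hd ω r (by positivity)
    _ ≤ K * ν (sector par lev x) := by gcongr

lemma doubling_of_measure_sector_par_le (hconn : ∀ x y : T, ∃ n m : ℕ, par^[n] x = par^[m] y)
    {ν : Measure (PBoundary par lev)} {K : ℝ≥0∞}
    (h : ∀ x, ν (sector par lev (par x)) ≤ K * ν (sector par lev x))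
    (ω : PBoundary par lev) {r : ℝ} (hr : 0 < r) :
    ν (gball par lev ω (2 * r)) ≤ K * ν (gball par lev ω r) := by
  set j := ⌊Real.log r⌋
  have hjr : Real.exp j ≤ r := (Real.le_log_iff_exp_le hr).1 (Int.floor_le _)
  have hrj : r < Real.exp (j + 1) := (Real.log_lt_iff_lt_exp hr).1 (Int.lt_floor_add_one _)
  have h2r : 2 * r < Real.exp ((j + 1 : ℤ) + 1) := by
    rw [Real.exp_add, Int.cast_add, Int.cast_one]
    nlinarith [Real.exp_one_gt_two, Real.exp_pos (j + 1)]
  calc ν (gball par lev ω (2 * r)) ≤ ν (sector par lev (ω.1 (j + 1))) :=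
        measure_mono (gball_subset_sector hconn ω h2r)
    _ = ν (sector par lev (par (ω.1 j))) := by rw [ω.2.2]
    _ ≤ K * ν (sector par lev (ω.1 j)) := h _
    _ ≤ K * ν (gball par lev ω r) := by gcongr; exact sector_subset_gball hconn ω hjr

end Doubling

lemma ENNReal.le_ofReal_mul_iff_toReal_le {a b : ℝ≥0∞} (ha : a ≠ ∞) (hb : b ≠ ∞) {C : ℝ}
    (hC : 0 ≤ C) : a ≤ ENNReal.ofReal C * b ↔ a.toReal ≤ C * b.toReal := by
  rw [← ENNReal.toReal_le_toReal ha (ENNReal.mul_ne_top ENNReal.ofReal_ne_top hb),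
    ENNReal.toReal_mul, ENNReal.toReal_ofReal hC]

theorem stmt15_general {T : Type*} (par : T → T) (lev : T → ℤ)
    (hlev : ∀ x : T, lev (par x) = lev x + 1)
    (hsucc : ∀ x : T, ∃ y : T, par y = x)
    (hconn : ∀ x y : T, ∃ n m : ℕ, par^[n] x = par^[m] y)
    (ν : Measure (PBoundary par lev))
    (hν : ∀ x : T, 0 < ν (sector par lev x) ∧ ν (sector par lev x) < ⊤) :
    (∃ C : ℝ, 0 < C ∧ ∀ (ω : PBoundary par lev) (r : ℝ), 0 < r →
        ν (gball par lev ω (2 * r)) ≤ ENNReal.ofReal C * ν (gball par lev ω r))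
      ↔ ∃ C' : ℝ, 0 < C' ∧ ∀ x : T, mnu par lev ν (par x) ≤ C' * mnu par lev ν x := by
  have hlocal : ∀ C : ℝ, 0 ≤ C → ((∀ x, mnu par lev ν (par x) ≤ C * mnu par lev ν x) ↔
      ∀ x, ν (sector par lev (par x)) ≤ ENNReal.ofReal C * ν (sector par lev x)) :=
    fun C hC => forall_congr' fun x =>
      (ENNReal.le_ofReal_mul_iff_toReal_le (hν _).2.ne (hν _).2.ne hC).symm
  constructor
  · rintro ⟨C, hC, hd⟩
    exact ⟨C, hC, (hlocal C hC.le).2 (measure_sector_par_le_of_doubling hlev hsucc hconn hd)⟩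
  · rintro ⟨C', hC', hloc⟩
    exact ⟨C', hC', fun ω r hr =>
      doubling_of_measure_sector_par_le hconn ((hlocal C' hC'.le).1 hloc) ω hr⟩

/-- `(∂T, ρ, ν)` is doubling if and only if `(T, d, m_ν)` is locally
doubling, i.e. `m_ν(p(x)) ≤ C' m_ν(x)` uniformly. -/
theorem stmt15 {T : Type*} [Nonempty T] (par : T → T) (lev : T → ℤ)
    (hlev : ∀ x : T, lev (par x) = lev x + 1)
    (hfin : ∀ x : T, {y : T | par y = x}.Finite)
    (hsucc : ∀ x : T, ∃ y : T, par y = x)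
    (hconn : ∀ x y : T, ∃ n m : ℕ, par^[n] x = par^[m] y)
    (htwo : ∀ x : T, ∃ y z : T, y ≠ z ∧ par y = x ∧ par z = x)
    (ν : Measure (PBoundary par lev))
    (hν : ∀ x : T, 0 < ν (sector par lev x) ∧ ν (sector par lev x) < ⊤) :
    (∃ C : ℝ, 0 < C ∧ ∀ (ω : PBoundary par lev) (r : ℝ), 0 < r →
        ν (gball par lev ω (2 * r)) ≤ ENNReal.ofReal C * ν (gball par lev ω r))
      ↔ ∃ C' : ℝ, 0 < C' ∧ ∀ x : T, mnu par lev ν (par x) ≤ C' * mnu par lev ν x :=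
  stmt15_general par lev hlev hsucc hconn ν hν
end

section
/- Assume every x ∈ T has at least two successors and that there exist c₁, c₂ > 1 with c₂ m_ν(y) ≤ m_ν(x) ≤ c₁ m_ν(y) for all x ∈ T and y ∈ s(x). Let b : ∂T → ℝ be integrable on every sector and let A ≥ 0. Suppose that for every y ∈ T and every function a : ∂T → ℝ supported in ∂T_y with ∫_{∂T} a dν = 0 and ‖a‖_∞ ≤ 1/m_ν(y), one has |∫_{∂T} a b dν| ≤ A. Then b ∈ BMO with ‖b‖_{BMO} ≤ 2A. -/
open MeasureTheory
open scoped ENNReal NNReal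

/-! Fix a sector `S = ∂T_x` with `m = ν(S)` and let `σ = sign (b - ⨍_S b)`. The function
`a = (σ - ⨍_S σ) / (2m)` on `S` is an admissible atom: it has mean zero and `|a| ≤ 1/m`. Because
`a` has mean zero, `∫ a b = ∫ a (b - ⨍_S b) = (2m)⁻¹ ∫_S |b - ⨍_S b|`, so the hypothesis bounds the
mean oscillation of `b` on `S` by `2A`. -/

lemma monotone_coe_sign : Monotone fun x : ℝ => (SignType.sign x : ℝ) := by
  intro x y hxy
  simp only [sign_apply]
  split_ifs <;> norm_num <;> linarith

lemma abs_coe_sign_le_one (x : ℝ) : |(SignType.sign x : ℝ)| ≤ 1 := by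
  rcases SignType.sign x with _ | _ | _ <;> simp

section CenteredAtom

variable {α : Type*} [MeasurableSpace α] {μ : Measure α} {s : Set α} {g b : α → ℝ}

lemma setIntegral_sub_setAverage_mul (hμs : μ s ≠ ∞) (hg : IntegrableOn g s μ)
    (hb : IntegrableOn b s μ) (hgb : IntegrableOn (fun x => g x * b x) s μ) :
    ∫ x in s, (g x - ⨍ y in s, g y ∂μ) * b x ∂μ =
      ∫ x in s, g x * (b x - ⨍ y in s, b y ∂μ) ∂μ := by
  simp only [sub_mul, mul_sub]
  rw [integral_sub hgb (hb.const_mul _), integral_sub hgb (hg.mul_const _), integral_const_mul,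
    integral_mul_const, ← measure_smul_setAverage g hμs, ← measure_smul_setAverage b hμs,
    smul_eq_mul, smul_eq_mul]
  ring

noncomputable def centeredAtom (μ : Measure α) (s : Set α) (g : α → ℝ) : α → ℝ :=
  s.indicator fun x => (2 * μ.real s)⁻¹ * (g x - ⨍ y in s, g y ∂μ)

lemma integrable_centeredAtom (hs : MeasurableSet s) (hμs : μ s ≠ ∞) (hg : IntegrableOn g s μ) :
    Integrable (centeredAtom μ s g) μ :=
  (integrable_indicator_iff hs).2 ((hg.sub (integrableOn_const hμs)).const_mul _)

lemma integral_centeredAtom (hs : MeasurableSet s) (hμs : μ s ≠ ∞) :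
    ∫ x, centeredAtom μ s g x ∂μ = 0 := by
  rw [centeredAtom, integral_indicator hs, integral_const_mul, setAverage_sub_setAverage hμs,
    mul_zero]

lemma abs_centeredAtom_le (hμ₀ : μ s ≠ 0) (hμs : μ s ≠ ∞) (hg : IntegrableOn g s μ)
    (hg₁ : ∀ x, |g x| ≤ 1) (x : α) : |centeredAtom μ s g x| ≤ (μ.real s)⁻¹ := by
  have hm : 0 < μ.real s := ENNReal.toReal_pos hμ₀ hμs
  by_cases hx : x ∈ s
  · obtain ⟨y, -, hy⟩ := exists_le_setAverage hμ₀ hμs hg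
    obtain ⟨z, -, hz⟩ := exists_setAverage_le hμ₀ hμs hg
    have hosc : |g x - ⨍ y in s, g y ∂μ| ≤ 2 := by
      have := abs_le.1 (hg₁ x); have := abs_le.1 (hg₁ y); have := abs_le.1 (hg₁ z)
      exact abs_le.2 ⟨by linarith, by linarith⟩
    rw [centeredAtom, Set.indicator_of_mem hx, abs_mul, abs_of_pos (by positivity)]
    calc (2 * μ.real s)⁻¹ * |g x - ⨍ y in s, g y ∂μ| ≤ (2 * μ.real s)⁻¹ * 2 := by gcongr
      _ = (μ.real s)⁻¹ := by field_simp
  · rw [centeredAtom, Set.indicator_of_notMem hx, abs_zero]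
    positivity

lemma integral_centeredAtom_mul (hs : MeasurableSet s) (hμs : μ s ≠ ∞)
    (hg : IntegrableOn g s μ) (hb : IntegrableOn b s μ)
    (hgb : IntegrableOn (fun x => g x * b x) s μ) :
    ∫ x, centeredAtom μ s g x * b x ∂μ =
      (2 * μ.real s)⁻¹ * ∫ x in s, g x * (b x - ⨍ y in s, b y ∂μ) ∂μ := by
  simp only [centeredAtom, ← Set.indicator_mul_left, mul_assoc]
  rw [integral_indicator hs, integral_const_mul, setIntegral_sub_setAverage_mul hμs hg hb hgb]

theorem setAverage_abs_sub_setAverage_le_two_mul (hs : MeasurableSet s) (hμ₀ : μ s ≠ 0)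
    (hμs : μ s ≠ ∞) (hb : IntegrableOn b s μ) {A : ℝ}
    (h : ∀ a : α → ℝ, Integrable a μ → (∀ x, x ∉ s → a x = 0) → ∫ x, a x ∂μ = 0 →
      (∀ x, |a x| ≤ (μ.real s)⁻¹) → |∫ x, a x * b x ∂μ| ≤ A) :
    ⨍ x in s, |b x - ⨍ y in s, b y ∂μ| ∂μ ≤ 2 * A := by
  set g : α → ℝ := fun x => SignType.sign (b x - ⨍ y in s, b y ∂μ)
  have hg₁ : ∀ x, |g x| ≤ 1 := fun x => abs_coe_sign_le_one _
  have hg_meas : AEStronglyMeasurable g (μ.restrict s) :=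
    (monotone_coe_sign.measurable.comp_aemeasurable
      (hb.aemeasurable.sub aemeasurable_const)).aestronglyMeasurable
  have hg : IntegrableOn g s μ :=
    (integrableOn_const hμs).mono' hg_meas (ae_of_all _ hg₁)
  have hgb : IntegrableOn (fun x => g x * b x) s μ :=
    hb.bdd_mul hg_meas (ae_of_all _ hg₁)
  have hatom := h (centeredAtom μ s g) (integrable_centeredAtom hs hμs hg)
    (fun x hx => Set.indicator_of_notMem hx _) (integral_centeredAtom hs hμs)
    (abs_centeredAtom_le hμ₀ hμs hg hg₁)
  rw [integral_centeredAtom_mul hs hμs hg hb hgb] at hatom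
  simp only [g, sign_mul_self] at hatom
  have hm : 0 < μ.real s := ENNReal.toReal_pos hμ₀ hμs
  have hI : 0 ≤ ∫ x in s, |b x - ⨍ y in s, b y ∂μ| ∂μ := integral_nonneg fun _ => abs_nonneg _
  rw [abs_of_nonneg (by positivity), mul_inv, mul_assoc] at hatom
  rw [setAverage_eq, smul_eq_mul]
  linarith

end CenteredAtom

theorem stmt19_general {T : Type*} (par : T → T) (lev : T → ℤ)
    (ν : Measure (PBoundary par lev))
    (hν : ∀ x : T, 0 < ν (sector par lev x) ∧ ν (sector par lev x) < ⊤)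
    (b : PBoundary par lev → ℝ)
    (hb : ∀ x : T, IntegrableOn b (sector par lev x) ν)
    (A : ℝ)
    (h : ∀ (y : T) (a : PBoundary par lev → ℝ),
      Integrable a ν →
      (∀ ω : PBoundary par lev, ω ∉ sector par lev y → a ω = 0) →
      (∫ ω, a ω ∂ν) = 0 →
      (∀ ω : PBoundary par lev, |a ω| ≤ (mnu par lev ν y)⁻¹) →
      |∫ ω, a ω * b ω ∂ν| ≤ A) :
    ∀ x : T,
      (mnu par lev ν x)⁻¹ *
          ∫ ω in sector par lev x,
            |b ω - (mnu par lev ν x)⁻¹ * ∫ ξ in sector par lev x, b ξ ∂ν| ∂ν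
        ≤ 2 * A := by
  intro x
  have hx : MeasurableSet (sector par lev x) := MeasurableSpace.measurableSet_generateFrom ⟨x, rfl⟩
  simpa only [setAverage_eq, smul_eq_mul, mnu, measureReal_def] using
    setAverage_abs_sub_setAverage_le_two_mul hx (hν x).1.ne' (hν x).2.ne (hb x) (h x)

/-- Assume every vertex has at least two successors and
`c₂ m_ν(y) ≤ m_ν(x) ≤ c₁ m_ν(y)` for `y ∈ s(x)`. If `b` is locally integrable and
`|∫ a b dν| ≤ A` for every `a` supported in a sector `∂T_y`, with zero average and
`‖a‖_∞ ≤ 1/m_ν(y)`, then `b ∈ BMO` with `‖b‖_{BMO} ≤ 2A`. -/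
theorem stmt19 {T : Type*} [Nonempty T] (par : T → T) (lev : T → ℤ)
    (hlev : ∀ x : T, lev (par x) = lev x + 1)
    (hfin : ∀ x : T, {y : T | par y = x}.Finite)
    (htwo : ∀ x : T, ∃ y z : T, y ≠ z ∧ par y = x ∧ par z = x)
    (hconn : ∀ x y : T, ∃ n m : ℕ, par^[n] x = par^[m] y)
    (ν : Measure (PBoundary par lev))
    (hν : ∀ x : T, 0 < ν (sector par lev x) ∧ ν (sector par lev x) < ⊤)
    (c₁ c₂ : ℝ) (hc₁ : 1 < c₁) (hc₂ : 1 < c₂)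
    (hdoub : ∀ x y : T, par y = x →
      c₂ * mnu par lev ν y ≤ mnu par lev ν x ∧ mnu par lev ν x ≤ c₁ * mnu par lev ν y)
    (b : PBoundary par lev → ℝ)
    (hb : ∀ x : T, IntegrableOn b (sector par lev x) ν)
    (A : ℝ) (hA : 0 ≤ A)
    (h : ∀ (y : T) (a : PBoundary par lev → ℝ),
      Integrable a ν →
      (∀ ω : PBoundary par lev, ω ∉ sector par lev y → a ω = 0) →
      (∫ ω, a ω ∂ν) = 0 →
      (∀ ω : PBoundary par lev, |a ω| ≤ (mnu par lev ν y)⁻¹) →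
      |∫ ω, a ω * b ω ∂ν| ≤ A) :
    ∀ x : T,
      (mnu par lev ν x)⁻¹ *
          ∫ ω in sector par lev x,
            |b ω - (mnu par lev ν x)⁻¹ * ∫ ξ in sector par lev x, b ξ ∂ν| ∂ν
        ≤ 2 * A :=
  stmt19_general par lev ν hν b hb A h
end
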